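/- arXiv:1402.0130 — 7 statements merged into one kernel-verified Lean document; each statement's English description precedes it below -/
import Mathlib

section
/- The graph of the jump map G of the two-gene hybrid system, i.e. the set {(z,w) ∈ ℝ⁴ × ℝ⁴ : z ∈ D, w ∈ G(z)}, is a closed subset of ℝ⁴ × ℝ⁴; moreover G(z) is nonempty for every z ∈ D. (Hence G is outer semicontinuous and locally bounded relative to D.) -/
/-!
On `C` both switching functions are nonpositive, so `z ∈ D` and `w ∈ G z` hold exactly when
`η₁ = 0` at `z` and `w = g₁ z`, or `η₂ = 0` at `z` and `w = g₂ z`. The graph of `G` is therefore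
the union of the graphs of the continuous maps `g₁`, `g₂` over the closed sets `C ∩ {η₁ = 0}`
and `C ∩ {η₂ = 0}`, and every `z ∈ D` has `g₁ z` or `g₂ z` in `G z`.
-/

theorem isClosed_setOf_fst_mem_and_snd_eq {X Y : Type*} [TopologicalSpace X]
    [TopologicalSpace Y] [T2Space Y] {S : Set X} (hS : IsClosed S) {g : X → Y}
    (hg : Continuous g) : IsClosed {p : X × Y | p.1 ∈ S ∧ p.2 = g p.1} :=
  (hS.preimage continuous_fst).inter (isClosed_eq continuous_snd (hg.comp continuous_fst))

section SwitchedJumpMap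

variable {X Y R : Type*} [LinearOrder R] [Zero R] {C : Set X} {a b : X → R}
  {g₁ g₂ : X → Y} {G : X → Set Y}

theorem mem_switched_jump_iff
    (hG₁ : ∀ z, a z = 0 → b z < 0 → G z = {g₁ z})
    (hG₂ : ∀ z, a z < 0 → b z = 0 → G z = {g₂ z})
    (hG₃ : ∀ z, a z = 0 → b z = 0 → G z = {g₁ z, g₂ z})
    {z : X} (haz : a z ≤ 0) (hbz : b z ≤ 0) (w : Y) :
    (a z = 0 ∨ b z = 0) ∧ w ∈ G z ↔ a z = 0 ∧ w = g₁ z ∨ b z = 0 ∧ w = g₂ z := by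
  rcases haz.lt_or_eq with ha | ha <;> rcases hbz.lt_or_eq with hb | hb
  · simp [ha.ne, hb.ne]
  · simp [ha.ne, hb, hG₂ z ha hb]
  · simp [ha, hb.ne, hG₁ z ha hb]
  · simp [ha, hb, hG₃ z ha hb]

variable (ha : ∀ z ∈ C, a z ≤ 0) (hb : ∀ z ∈ C, b z ≤ 0)
  (hG₁ : ∀ z, a z = 0 → b z < 0 → G z = {g₁ z})
  (hG₂ : ∀ z, a z < 0 → b z = 0 → G z = {g₂ z})
  (hG₃ : ∀ z, a z = 0 → b z = 0 → G z = {g₁ z, g₂ z})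
include ha hb hG₁ hG₂ hG₃

theorem setOf_switched_jump_graph_eq :
    {p : X × Y | p.1 ∈ {z ∈ C | a z = 0} ∪ {z ∈ C | b z = 0} ∧ p.2 ∈ G p.1} =
      {p | p.1 ∈ {z ∈ C | a z = 0} ∧ p.2 = g₁ p.1} ∪
        {p | p.1 ∈ {z ∈ C | b z = 0} ∧ p.2 = g₂ p.1} := by
  ext ⟨z, w⟩
  simp only [Set.mem_ofPred_eq, Set.mem_union]
  by_cases hz : z ∈ C
  · simpa [hz] using mem_switched_jump_iff hG₁ hG₂ hG₃ (ha z hz) (hb z hz) w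
  · simp [hz]

theorem isClosed_switched_jump_graph [TopologicalSpace X] [TopologicalSpace Y] [T2Space Y]
    [TopologicalSpace R] [T1Space R] (hC : IsClosed C) (ha_cont : Continuous a)
    (hb_cont : Continuous b) (hg₁ : Continuous g₁) (hg₂ : Continuous g₂) :
    IsClosed {p : X × Y | p.1 ∈ {z ∈ C | a z = 0} ∪ {z ∈ C | b z = 0} ∧ p.2 ∈ G p.1} := by
  rw [setOf_switched_jump_graph_eq ha hb hG₁ hG₂ hG₃]
  exact
    (isClosed_setOf_fst_mem_and_snd_eq (hC.inter (isClosed_singleton.preimage ha_cont)) hg₁).union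
      (isClosed_setOf_fst_mem_and_snd_eq (hC.inter (isClosed_singleton.preimage hb_cont)) hg₂)

theorem switched_jump_nonempty :
    ∀ z ∈ {z ∈ C | a z = 0} ∪ {z ∈ C | b z = 0}, (G z).Nonempty := by
  have hgraph := setOf_switched_jump_graph_eq ha hb hG₁ hG₂ hG₃
  rintro z (hz | hz)
  · exact ⟨g₁ z, (hgraph.symm.subset (Or.inl ⟨hz, rfl⟩) : (z, g₁ z) ∈ _).2⟩
  · exact ⟨g₂ z, (hgraph.symm.subset (Or.inr ⟨hz, rfl⟩) : (z, g₂ z) ∈ _).2⟩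

end SwitchedJumpMap

theorem jump_map_graph_closed_and_nonempty_general
    (θ₁ θ₂ h₁ h₂ : ℝ)
    (η₁ η₂ : ℝ → ℝ → ℝ)
    (hη₁ : ∀ x q, η₁ x q = (2 * q - 1) * (-x + θ₁ + (1 - 2 * q) * h₁))
    (hη₂ : ∀ x q, η₂ x q = (2 * q - 1) * (-x + θ₂ + (1 - 2 * q) * h₂))
    (C D : Set (ℝ × ℝ × ℝ × ℝ))
    (hC : C = {z : ℝ × ℝ × ℝ × ℝ |
      0 ≤ z.1 ∧ 0 ≤ z.2.1 ∧ (z.2.2.1 = 0 ∨ z.2.2.1 = 1) ∧ (z.2.2.2 = 0 ∨ z.2.2.2 = 1) ∧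
      η₁ z.1 z.2.2.1 ≤ 0 ∧ η₂ z.2.1 z.2.2.2 ≤ 0})
    (hD : D = {z ∈ C | η₁ z.1 z.2.2.1 = 0} ∪ {z ∈ C | η₂ z.2.1 z.2.2.2 = 0})
    (g₁ g₂ : (ℝ × ℝ × ℝ × ℝ) → (ℝ × ℝ × ℝ × ℝ))
    (hg₁ : ∀ z : ℝ × ℝ × ℝ × ℝ, g₁ z = (z.1, z.2.1, 1 - z.2.2.1, z.2.2.2))
    (hg₂ : ∀ z : ℝ × ℝ × ℝ × ℝ, g₂ z = (z.1, z.2.1, z.2.2.1, 1 - z.2.2.2))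
    (G : (ℝ × ℝ × ℝ × ℝ) → Set (ℝ × ℝ × ℝ × ℝ))
    (hG1 : ∀ z : ℝ × ℝ × ℝ × ℝ, η₁ z.1 z.2.2.1 = 0 → η₂ z.2.1 z.2.2.2 < 0 → G z = {g₁ z})
    (hG2 : ∀ z : ℝ × ℝ × ℝ × ℝ, η₁ z.1 z.2.2.1 < 0 → η₂ z.2.1 z.2.2.2 = 0 → G z = {g₂ z})
    (hG3 : ∀ z : ℝ × ℝ × ℝ × ℝ, η₁ z.1 z.2.2.1 = 0 → η₂ z.2.1 z.2.2.2 = 0 →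
      G z = {g₁ z, g₂ z}) :
    IsClosed {p : (ℝ × ℝ × ℝ × ℝ) × (ℝ × ℝ × ℝ × ℝ) | p.1 ∈ D ∧ p.2 ∈ G p.1} ∧
      ∀ z ∈ D, (G z).Nonempty := by
  have hη₁_cont : Continuous fun z : ℝ × ℝ × ℝ × ℝ => η₁ z.1 z.2.2.1 := by
    simp only [hη₁]; fun_prop
  have hη₂_cont : Continuous fun z : ℝ × ℝ × ℝ × ℝ => η₂ z.2.1 z.2.2.2 := by
    simp only [hη₂]; fun_prop
  have hC_closed : IsClosed C := by
    simp only [hC, Set.ofPred_and, Set.ofPred_or]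
    repeat' apply_rules [IsClosed.inter, IsClosed.union, isClosed_le, isClosed_eq]
    all_goals fun_prop
  have hη₁_nonpos : ∀ z ∈ C, η₁ z.1 z.2.2.1 ≤ 0 := fun z hz => (hC ▸ hz).2.2.2.2.1
  have hη₂_nonpos : ∀ z ∈ C, η₂ z.2.1 z.2.2.2 ≤ 0 := fun z hz => (hC ▸ hz).2.2.2.2.2
  subst hD
  exact ⟨isClosed_switched_jump_graph hη₁_nonpos hη₂_nonpos hG1 hG2 hG3 hC_closed
      hη₁_cont hη₂_cont (by rw [funext hg₁]; fun_prop) (by rw [funext hg₂]; fun_prop),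
    switched_jump_nonempty hη₁_nonpos hη₂_nonpos hG1 hG2 hG3⟩

/-- The graph of the jump map `G` of the two-gene hybrid system,
`{(z, w) : z ∈ D, w ∈ G z}`, is closed in `ℝ⁴ × ℝ⁴`, and `G z` is nonempty for every `z ∈ D`. -/
theorem jump_map_graph_closed_and_nonempty
    (k₁ k₂ γ₁ γ₂ θ₁ θ₂ h₁ h₂ : ℝ)
    (hk₁ : 0 < k₁) (hk₂ : 0 < k₂) (hγ₁ : 0 < γ₁) (hγ₂ : 0 < γ₂)
    (hθ₁ : 0 < θ₁) (hθ₂ : 0 < θ₂) (hh₁ : 0 < h₁) (hh₂ : 0 < h₂)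
    (hθh₁ : 0 < θ₁ - h₁) (hθh₂ : 0 < θ₂ - h₂)
    (η₁ η₂ : ℝ → ℝ → ℝ)
    (hη₁ : ∀ x q, η₁ x q = (2 * q - 1) * (-x + θ₁ + (1 - 2 * q) * h₁))
    (hη₂ : ∀ x q, η₂ x q = (2 * q - 1) * (-x + θ₂ + (1 - 2 * q) * h₂))
    (C D : Set (ℝ × ℝ × ℝ × ℝ))
    (hC : C = {z : ℝ × ℝ × ℝ × ℝ |
      0 ≤ z.1 ∧ 0 ≤ z.2.1 ∧ (z.2.2.1 = 0 ∨ z.2.2.1 = 1) ∧ (z.2.2.2 = 0 ∨ z.2.2.2 = 1) ∧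
      η₁ z.1 z.2.2.1 ≤ 0 ∧ η₂ z.2.1 z.2.2.2 ≤ 0})
    (hD : D = {z ∈ C | η₁ z.1 z.2.2.1 = 0} ∪ {z ∈ C | η₂ z.2.1 z.2.2.2 = 0})
    (g₁ g₂ : (ℝ × ℝ × ℝ × ℝ) → (ℝ × ℝ × ℝ × ℝ))
    (hg₁ : ∀ z : ℝ × ℝ × ℝ × ℝ, g₁ z = (z.1, z.2.1, 1 - z.2.2.1, z.2.2.2))
    (hg₂ : ∀ z : ℝ × ℝ × ℝ × ℝ, g₂ z = (z.1, z.2.1, z.2.2.1, 1 - z.2.2.2))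
    (G : (ℝ × ℝ × ℝ × ℝ) → Set (ℝ × ℝ × ℝ × ℝ))
    (hG1 : ∀ z : ℝ × ℝ × ℝ × ℝ, η₁ z.1 z.2.2.1 = 0 → η₂ z.2.1 z.2.2.2 < 0 → G z = {g₁ z})
    (hG2 : ∀ z : ℝ × ℝ × ℝ × ℝ, η₁ z.1 z.2.2.1 < 0 → η₂ z.2.1 z.2.2.2 = 0 → G z = {g₂ z})
    (hG3 : ∀ z : ℝ × ℝ × ℝ × ℝ, η₁ z.1 z.2.2.1 = 0 → η₂ z.2.1 z.2.2.2 = 0 →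
      G z = {g₁ z, g₂ z}) :
    IsClosed {p : (ℝ × ℝ × ℝ × ℝ) × (ℝ × ℝ × ℝ × ℝ) | p.1 ∈ D ∧ p.2 ∈ G p.1} ∧
      ∀ z ∈ D, (G z).Nonempty :=
  jump_map_graph_closed_and_nonempty_general θ₁ θ₂ h₁ h₂ η₁ η₂ hη₁ hη₂ C D hC hD g₁ g₂ hg₁ hg₂ G hG1
    hG2 hG3
end

section
/- Let R₁ = [0, θ₁+h₁] × [0, θ₂+h₂] ⊂ ℝ². For every x = (x₁,x₂) ∈ R₁ with x₁ < θ₁ + h₁, the vector (k₁ − γ₁x₁, −γ₂x₂) belongs to the tangent cone of R₁ at x. (This is the viability condition (VC) on the boundary of the flow-set component C₁ away from the jump set, used to prove existence of nontrivial solutions.) -/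
/-!
For short positive times `t`, `x + t • v` stays in a box as soon as `v` points inward in each
coordinate where `x` lies on a face; this gives `v` in the tangent cone. At the flow vector the
only faces to check are `x₁ = 0`, where its first coordinate is `k₁ > 0`, and the two faces in `x₂`,
where `-γ₂ x₂` vanishes or is nonpositive.
-/

open Filter Set Topology

theorem eventually_le_add_mul {a x v : ℝ} (hx : a ≤ x) (ha : x = a → 0 ≤ v) :
    ∀ᶠ t in 𝓝[>] (0 : ℝ), a ≤ x + t * v := by
  rcases hx.eq_or_lt with rfl | hax
  · filter_upwards [self_mem_nhdsWithin] with t ht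
    exact le_add_of_nonneg_right (mul_nonneg (le_of_lt ht) (ha rfl))
  · have hcont : Tendsto (fun t : ℝ ↦ x + t * v) (𝓝 0) (𝓝 x) :=
      Continuous.tendsto' (by fun_prop) 0 x (by simp)
    exact (hcont.eventually (lt_mem_nhds hax)).filter_mono nhdsWithin_le_nhds |>.mono
      fun _ ↦ le_of_lt

theorem eventually_add_mul_mem_Icc {a b x v : ℝ} (hx : x ∈ Icc a b)
    (ha : x = a → 0 ≤ v) (hb : x = b → v ≤ 0) :
    ∀ᶠ t in 𝓝[>] (0 : ℝ), x + t * v ∈ Icc a b := by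
  have hupper : ∀ᶠ t in 𝓝[>] (0 : ℝ), -b ≤ -x + t * -v :=
    eventually_le_add_mul (neg_le_neg hx.2) fun h ↦ neg_nonneg.2 (hb (neg_inj.1 h))
  filter_upwards [eventually_le_add_mul hx.1 ha, hupper] with t hlo hhi
  exact ⟨hlo, by linarith⟩

theorem mem_tangentConeAt_Icc_prod_Icc {a₁ b₁ a₂ b₂ : ℝ} {x v : ℝ × ℝ}
    (hx : x ∈ Icc a₁ b₁ ×ˢ Icc a₂ b₂)
    (ha₁ : x.1 = a₁ → 0 ≤ v.1) (hb₁ : x.1 = b₁ → v.1 ≤ 0)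
    (ha₂ : x.2 = a₂ → 0 ≤ v.2) (hb₂ : x.2 = b₂ → v.2 ≤ 0) :
    v ∈ tangentConeAt ℝ (Icc a₁ b₁ ×ˢ Icc a₂ b₂) x := by
  refine mem_tangentConeAt_of_add_smul_mem (tendsto_id'.2 (nhdsGT_le_nhdsNE 0)) ?_
  filter_upwards [eventually_add_mul_mem_Icc hx.1 ha₁ hb₁,
    eventually_add_mul_mem_Icc hx.2 ha₂ hb₂] with t h₁ h₂
  exact ⟨h₁, h₂⟩

theorem viability_condition_C1_general
    (k₁ γ₁ γ₂ θ₁ θ₂ h₁ h₂ : ℝ)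
    (hk₁ : 0 < k₁) (hγ₂ : 0 < γ₂) :
    ∀ x : ℝ × ℝ, x ∈ Set.Icc (0 : ℝ) (θ₁ + h₁) ×ˢ Set.Icc (0 : ℝ) (θ₂ + h₂) →
      x.1 < θ₁ + h₁ →
      ((k₁ - γ₁ * x.1, -γ₂ * x.2) : ℝ × ℝ) ∈
        tangentConeAt ℝ (Set.Icc (0 : ℝ) (θ₁ + h₁) ×ˢ Set.Icc (0 : ℝ) (θ₂ + h₂)) x := by
  intro x hx hlt
  apply mem_tangentConeAt_Icc_prod_Icc hx
  · intro h
    simp [h, hk₁.le]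
  · exact fun h ↦ absurd h hlt.ne
  · intro h
    simp [h]
  · intro _
    simpa using mul_nonneg hγ₂.le hx.2.1

/-- Viability condition on the boundary of the flow-set component `C₁` away from the jump set:
for `x` in `R₁ = [0, θ₁+h₁] × [0, θ₂+h₂]` with `x₁ < θ₁+h₁`, the flow vector
`(k₁ - γ₁ x₁, -γ₂ x₂)` belongs to the tangent cone of `R₁` at `x`. -/
theorem viability_condition_C1
    (k₁ k₂ γ₁ γ₂ θ₁ θ₂ h₁ h₂ : ℝ)
    (hk₁ : 0 < k₁) (hk₂ : 0 < k₂) (hγ₁ : 0 < γ₁) (hγ₂ : 0 < γ₂)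
    (hθ₁ : 0 < θ₁) (hθ₂ : 0 < θ₂) (hh₁ : 0 < h₁) (hh₂ : 0 < h₂)
    (hθh₁ : 0 < θ₁ - h₁) (hθh₂ : 0 < θ₂ - h₂) :
    ∀ x : ℝ × ℝ, x ∈ Set.Icc (0 : ℝ) (θ₁ + h₁) ×ˢ Set.Icc (0 : ℝ) (θ₂ + h₂) →
      x.1 < θ₁ + h₁ →
      ((k₁ - γ₁ * x.1, -γ₂ * x.2) : ℝ × ℝ) ∈
        tangentConeAt ℝ (Set.Icc (0 : ℝ) (θ₁ + h₁) ×ˢ Set.Icc (0 : ℝ) (θ₂ + h₂)) x :=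
  viability_condition_C1_general k₁ γ₁ γ₂ θ₁ θ₂ h₁ h₂ hk₁ hγ₂
end

section
/- Case 1 equilibrium (Proposition on equilibria, case 1): if θ₁ + h₁ < k₁/γ₁ and 0 < k₂/γ₂ < θ₂ + h₂, then the point z₁* = (k₁/γ₁, k₂/γ₂, 1, 0) belongs to the flow set C and satisfies F(z₁*) = 0, and it is the unique point z ∈ C with F(z) = 0. -/
/-!
Both flow equations are linear in `x` once the discrete state is fixed, so a zero of `F` has
`x₁ = k₁ (1 - q₂) / γ₁` and `x₂ = k₂ q₁ / γ₂`. The hysteresis guards then pin down the discrete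
state: `q₂ = 1` would force `x₁ = 0` below the lower threshold of gene 1, hence `q₁ = 0`, hence
`x₂ = 0` below the lower threshold of gene 2, hence `q₂ = 0`; and with `q₂ = 0` the value
`x₁ = k₁ / γ₁` lies above the upper threshold of gene 1, hence `q₁ = 1`.
-/

def hysteresisSwitch (θ h x q : ℝ) : ℝ := (2 * q - 1) * (-x + θ + (1 - 2 * q) * h)

section hysteresisSwitch

variable {θ h x q : ℝ}

theorem hysteresisSwitch_zero_nonpos_iff : hysteresisSwitch θ h x 0 ≤ 0 ↔ x ≤ θ + h := by
  unfold hysteresisSwitch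
  constructor <;> intro <;> linarith

theorem hysteresisSwitch_one_nonpos_iff : hysteresisSwitch θ h x 1 ≤ 0 ↔ θ - h ≤ x := by
  unfold hysteresisSwitch
  constructor <;> intro <;> linarith

theorem eq_zero_of_hysteresisSwitch_nonpos (hq : q = 0 ∨ q = 1)
    (hη : hysteresisSwitch θ h x q ≤ 0) (hx : x < θ - h) : q = 0 := by
  rcases hq with hq | rfl
  · exact hq
  · exact absurd (hysteresisSwitch_one_nonpos_iff.1 hη) hx.not_ge

theorem eq_one_of_hysteresisSwitch_nonpos (hq : q = 0 ∨ q = 1)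
    (hη : hysteresisSwitch θ h x q ≤ 0) (hx : θ + h < x) : q = 1 := by
  rcases hq with rfl | hq
  · exact absurd (hysteresisSwitch_zero_nonpos_iff.1 hη) hx.not_ge
  · exact hq

end hysteresisSwitch

theorem eq_div_of_sub_mul_eq_zero {K : Type*} [Field K] {k γ x : K} (hγ : γ ≠ 0)
    (h : k - γ * x = 0) : x = k / γ := by
  rw [eq_div_iff hγ]
  linear_combination -h

theorem case1_equilibrium_general
    (k₁ k₂ γ₁ γ₂ θ₁ θ₂ h₁ h₂ : ℝ)
    (hγ₁ : 0 < γ₁) (hγ₂ : 0 < γ₂)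
    (hh₁ : 0 < h₁)
    (hθh₁ : 0 < θ₁ - h₁) (hθh₂ : 0 < θ₂ - h₂)
    (η₁ η₂ : ℝ → ℝ → ℝ)
    (hη₁ : ∀ x q, η₁ x q = (2 * q - 1) * (-x + θ₁ + (1 - 2 * q) * h₁))
    (hη₂ : ∀ x q, η₂ x q = (2 * q - 1) * (-x + θ₂ + (1 - 2 * q) * h₂))
    (C : Set (ℝ × ℝ × ℝ × ℝ))
    (hC : C = {z : ℝ × ℝ × ℝ × ℝ |
      0 ≤ z.1 ∧ 0 ≤ z.2.1 ∧ (z.2.2.1 = 0 ∨ z.2.2.1 = 1) ∧ (z.2.2.2 = 0 ∨ z.2.2.2 = 1) ∧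
      η₁ z.1 z.2.2.1 ≤ 0 ∧ η₂ z.2.1 z.2.2.2 ≤ 0})
    (F : (ℝ × ℝ × ℝ × ℝ) → (ℝ × ℝ × ℝ × ℝ))
    (hF : ∀ z : ℝ × ℝ × ℝ × ℝ,
      F z = (k₁ * (1 - z.2.2.2) - γ₁ * z.1, k₂ * z.2.2.1 - γ₂ * z.2.1, 0, 0))
    (hc1 : θ₁ + h₁ < k₁ / γ₁) (hc2 : 0 < k₂ / γ₂) (hc3 : k₂ / γ₂ < θ₂ + h₂) :
    ((k₁ / γ₁, k₂ / γ₂, 1, 0) : ℝ × ℝ × ℝ × ℝ) ∈ C ∧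
    F (k₁ / γ₁, k₂ / γ₂, 1, 0) = 0 ∧
    ∀ z ∈ C, F z = 0 → z = ((k₁ / γ₁, k₂ / γ₂, 1, 0) : ℝ × ℝ × ℝ × ℝ) := by
  obtain rfl : η₁ = hysteresisSwitch θ₁ h₁ := funext₂ hη₁
  obtain rfl : η₂ = hysteresisSwitch θ₂ h₂ := funext₂ hη₂
  subst hC
  refine ⟨⟨by linarith, hc2.le, Or.inr rfl, Or.inl rfl, ?_, ?_⟩, ?_, ?_⟩
  · exact hysteresisSwitch_one_nonpos_iff.2 (by linarith)
  · exact hysteresisSwitch_zero_nonpos_iff.2 hc3.le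
  · rw [hF, Prod.mk_eq_zero, Prod.mk_eq_zero]
    refine ⟨?_, ?_, rfl⟩ <;> field_simp <;> ring
  · rintro ⟨x₁, x₂, q₁, q₂⟩ ⟨-, -, hq₁, hq₂, hg₁, hg₂⟩ hzero
    rw [hF, Prod.mk_eq_zero, Prod.mk_eq_zero] at hzero
    simp only at hq₁ hq₂ hg₁ hg₂ hzero
    have hx₁ : x₁ = k₁ * (1 - q₂) / γ₁ := eq_div_of_sub_mul_eq_zero hγ₁.ne' hzero.1
    have hx₂ : x₂ = k₂ * q₁ / γ₂ := eq_div_of_sub_mul_eq_zero hγ₂.ne' hzero.2.1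
    have hq₂_zero : q₂ = 0 := by
      rcases hq₂ with hq₂ | hq₂
      · exact hq₂
      have hq₁_zero : q₁ = 0 :=
        eq_zero_of_hysteresisSwitch_nonpos hq₁ hg₁
          (by rwa [hx₁, hq₂, sub_self, mul_zero, zero_div])
      exact eq_zero_of_hysteresisSwitch_nonpos (Or.inr hq₂) hg₂
        (by rwa [hx₂, hq₁_zero, mul_zero, zero_div])
    have hq₁_one : q₁ = 1 :=
      eq_one_of_hysteresisSwitch_nonpos hq₁ hg₁ (by rwa [hx₁, hq₂_zero, sub_zero, mul_one])
    subst hq₁_one hq₂_zero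
    simp [hx₁, hx₂]

/-- Case 1 equilibrium: if θ₁ + h₁ < k₁/γ₁ and 0 < k₂/γ₂ < θ₂ + h₂, then
z₁* = (k₁/γ₁, k₂/γ₂, 1, 0) is the unique zero of F in the flow set C. -/
theorem case1_equilibrium
    (k₁ k₂ γ₁ γ₂ θ₁ θ₂ h₁ h₂ : ℝ)
    (hk₁ : 0 < k₁) (hk₂ : 0 < k₂) (hγ₁ : 0 < γ₁) (hγ₂ : 0 < γ₂)
    (hθ₁ : 0 < θ₁) (hθ₂ : 0 < θ₂) (hh₁ : 0 < h₁) (hh₂ : 0 < h₂)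
    (hθh₁ : 0 < θ₁ - h₁) (hθh₂ : 0 < θ₂ - h₂)
    (η₁ η₂ : ℝ → ℝ → ℝ)
    (hη₁ : ∀ x q, η₁ x q = (2 * q - 1) * (-x + θ₁ + (1 - 2 * q) * h₁))
    (hη₂ : ∀ x q, η₂ x q = (2 * q - 1) * (-x + θ₂ + (1 - 2 * q) * h₂))
    (C : Set (ℝ × ℝ × ℝ × ℝ))
    (hC : C = {z : ℝ × ℝ × ℝ × ℝ |
      0 ≤ z.1 ∧ 0 ≤ z.2.1 ∧ (z.2.2.1 = 0 ∨ z.2.2.1 = 1) ∧ (z.2.2.2 = 0 ∨ z.2.2.2 = 1) ∧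
      η₁ z.1 z.2.2.1 ≤ 0 ∧ η₂ z.2.1 z.2.2.2 ≤ 0})
    (F : (ℝ × ℝ × ℝ × ℝ) → (ℝ × ℝ × ℝ × ℝ))
    (hF : ∀ z : ℝ × ℝ × ℝ × ℝ,
      F z = (k₁ * (1 - z.2.2.2) - γ₁ * z.1, k₂ * z.2.2.1 - γ₂ * z.2.1, 0, 0))
    (hc1 : θ₁ + h₁ < k₁ / γ₁) (hc2 : 0 < k₂ / γ₂) (hc3 : k₂ / γ₂ < θ₂ + h₂) :
    ((k₁ / γ₁, k₂ / γ₂, 1, 0) : ℝ × ℝ × ℝ × ℝ) ∈ C ∧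
    F (k₁ / γ₁, k₂ / γ₂, 1, 0) = 0 ∧
    ∀ z ∈ C, F z = 0 → z = ((k₁ / γ₁, k₂ / γ₂, 1, 0) : ℝ × ℝ × ℝ × ℝ) :=
  case1_equilibrium_general k₁ k₂ γ₁ γ₂ θ₁ θ₂ h₁ h₂ hγ₁ hγ₂ hh₁ hθh₁ hθh₂ η₁ η₂ hη₁ hη₂ C hC F hF
    hc1 hc2 hc3
end

section
/- Case 2 equilibrium (Proposition on equilibria, case 2): if 0 < k₁/γ₁ < θ₁ − h₁, then the point z₂* = (k₁/γ₁, 0, 0, 0) belongs to the flow set C and satisfies F(z₂*) = 0, and it is the unique point z ∈ C with F(z) = 0. -/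
/-!
At an equilibrium γ₁x₁ = k₁(1 − q₂) and γ₂x₂ = k₂q₁. If gene 2 were on (q₂ = 1), its hysteresis
band would force x₂ ≥ θ₂ − h₂ > 0, hence q₁ = 1, hence x₁ ≥ θ₁ − h₁ > 0, contradicting x₁ = 0.
So q₂ = 0 and x₁ = k₁/γ₁ < θ₁ − h₁, which rules out q₁ = 1; thus q₁ = 0 and x₂ = 0.
-/

def hysteresis (θ h x q : ℝ) : ℝ := (2 * q - 1) * (-x + θ + (1 - 2 * q) * h)

def flowSet (θ₁ θ₂ h₁ h₂ : ℝ) : Set (ℝ × ℝ × ℝ × ℝ) :=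
  {z | 0 ≤ z.1 ∧ 0 ≤ z.2.1 ∧ (z.2.2.1 = 0 ∨ z.2.2.1 = 1) ∧ (z.2.2.2 = 0 ∨ z.2.2.2 = 1) ∧
    hysteresis θ₁ h₁ z.1 z.2.2.1 ≤ 0 ∧ hysteresis θ₂ h₂ z.2.1 z.2.2.2 ≤ 0}

def flowMap (k₁ k₂ γ₁ γ₂ : ℝ) (z : ℝ × ℝ × ℝ × ℝ) : ℝ × ℝ × ℝ × ℝ :=
  (k₁ * (1 - z.2.2.2) - γ₁ * z.1, k₂ * z.2.2.1 - γ₂ * z.2.1, 0, 0)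

section
variable {k₁ k₂ γ₁ γ₂ θ₁ θ₂ h₁ h₂ θ h x : ℝ}

lemma hysteresis_zero_nonpos_iff : hysteresis θ h x 0 ≤ 0 ↔ x ≤ θ + h := by
  unfold hysteresis; constructor <;> intro _ <;> linarith

lemma hysteresis_one_nonpos_iff : hysteresis θ h x 1 ≤ 0 ↔ θ - h ≤ x := by
  unfold hysteresis; constructor <;> intro _ <;> linarith

lemma flowMap_eq_zero_iff {z : ℝ × ℝ × ℝ × ℝ} :
    flowMap k₁ k₂ γ₁ γ₂ z = 0 ↔ γ₁ * z.1 = k₁ * (1 - z.2.2.2) ∧ γ₂ * z.2.1 = k₂ * z.2.2.1 := by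
  simp only [flowMap, Prod.ext_iff, Prod.fst_zero, Prod.snd_zero, sub_eq_zero, and_true]
  exact and_congr eq_comm eq_comm

lemma mk_zero_zero_mem_flowSet_iff {x₁ x₂ : ℝ} :
    (x₁, x₂, 0, 0) ∈ flowSet θ₁ θ₂ h₁ h₂ ↔
      0 ≤ x₁ ∧ 0 ≤ x₂ ∧ x₁ ≤ θ₁ + h₁ ∧ x₂ ≤ θ₂ + h₂ := by
  simp [flowSet, hysteresis_zero_nonpos_iff]

lemma switch_two_eq_zero_of_equilibrium (hγ₁ : γ₁ ≠ 0) (hγ₂ : γ₂ ≠ 0)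
    (hθh₁ : 0 < θ₁ - h₁) (hθh₂ : 0 < θ₂ - h₂) {x₁ x₂ q₁ q₂ : ℝ}
    (hz : (x₁, x₂, q₁, q₂) ∈ flowSet θ₁ θ₂ h₁ h₂) (hF : flowMap k₁ k₂ γ₁ γ₂ (x₁, x₂, q₁, q₂) = 0) :
    q₂ = 0 := by
  obtain ⟨-, -, hq₁, hq₂ | rfl, hb₁, hb₂⟩ := hz
  · exact hq₂
  obtain ⟨hx₁, hx₂⟩ := flowMap_eq_zero_iff.1 hF
  rw [hysteresis_one_nonpos_iff] at hb₂
  have hx₁ : x₁ = 0 := by simpa [hγ₁] using hx₁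
  rcases hq₁ with rfl | rfl
  · have : x₂ = 0 := by simpa [hγ₂] using hx₂
    linarith
  · rw [hysteresis_one_nonpos_iff] at hb₁
    linarith

end

theorem case2_equilibrium_general
    (k₁ k₂ γ₁ γ₂ θ₁ θ₂ h₁ h₂ : ℝ)
    (hγ₁ : 0 < γ₁) (hγ₂ : 0 < γ₂)
    (hh₁ : 0 < h₁) (hh₂ : 0 < h₂)
    (hθh₁ : 0 < θ₁ - h₁) (hθh₂ : 0 < θ₂ - h₂)
    (η₁ η₂ : ℝ → ℝ → ℝ)
    (hη₁ : ∀ x q, η₁ x q = (2 * q - 1) * (-x + θ₁ + (1 - 2 * q) * h₁))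
    (hη₂ : ∀ x q, η₂ x q = (2 * q - 1) * (-x + θ₂ + (1 - 2 * q) * h₂))
    (C : Set (ℝ × ℝ × ℝ × ℝ))
    (hC : C = {z : ℝ × ℝ × ℝ × ℝ |
      0 ≤ z.1 ∧ 0 ≤ z.2.1 ∧ (z.2.2.1 = 0 ∨ z.2.2.1 = 1) ∧ (z.2.2.2 = 0 ∨ z.2.2.2 = 1) ∧
      η₁ z.1 z.2.2.1 ≤ 0 ∧ η₂ z.2.1 z.2.2.2 ≤ 0})
    (F : (ℝ × ℝ × ℝ × ℝ) → (ℝ × ℝ × ℝ × ℝ))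
    (hF : ∀ z : ℝ × ℝ × ℝ × ℝ,
      F z = (k₁ * (1 - z.2.2.2) - γ₁ * z.1, k₂ * z.2.2.1 - γ₂ * z.2.1, 0, 0))
    (hc1 : 0 < k₁ / γ₁) (hc2 : k₁ / γ₁ < θ₁ - h₁) :
    ((k₁ / γ₁, 0, 0, 0) : ℝ × ℝ × ℝ × ℝ) ∈ C ∧
    F (k₁ / γ₁, 0, 0, 0) = 0 ∧
    ∀ z ∈ C, F z = 0 → z = ((k₁ / γ₁, 0, 0, 0) : ℝ × ℝ × ℝ × ℝ) := by
  obtain rfl : η₁ = hysteresis θ₁ h₁ := funext₂ hη₁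
  obtain rfl : η₂ = hysteresis θ₂ h₂ := funext₂ hη₂
  obtain rfl : F = flowMap k₁ k₂ γ₁ γ₂ := funext hF
  obtain rfl : C = flowSet θ₁ θ₂ h₁ h₂ := hC
  have hγ₁' : γ₁ * (k₁ / γ₁) = k₁ := mul_div_cancel₀ k₁ hγ₁.ne'
  refine ⟨mk_zero_zero_mem_flowSet_iff.2 ⟨hc1.le, le_rfl, by linarith, by linarith⟩,
    flowMap_eq_zero_iff.2 ⟨by simpa using hγ₁', by simp⟩, ?_⟩
  rintro ⟨x₁, x₂, q₁, q₂⟩ hz hFz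
  obtain rfl := switch_two_eq_zero_of_equilibrium hγ₁.ne' hγ₂.ne' hθh₁ hθh₂ hz hFz
  obtain ⟨hγx₁, hγx₂⟩ := flowMap_eq_zero_iff.1 hFz
  have hx₁ : x₁ = k₁ / γ₁ := by field_simp; simpa [mul_comm] using hγx₁
  obtain ⟨-, -, rfl | rfl, -, hb₁, -⟩ := hz
  · have hx₂ : x₂ = 0 := by simpa [hγ₂.ne'] using hγx₂
    rw [hx₁, hx₂]
  · rw [hysteresis_one_nonpos_iff] at hb₁
    linarith

/-- Case 2 equilibrium: if 0 < k₁/γ₁ < θ₁ - h₁, then z₂* = (k₁/γ₁, 0, 0, 0)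
is the unique zero of F in the flow set C. -/
theorem case2_equilibrium
    (k₁ k₂ γ₁ γ₂ θ₁ θ₂ h₁ h₂ : ℝ)
    (hk₁ : 0 < k₁) (hk₂ : 0 < k₂) (hγ₁ : 0 < γ₁) (hγ₂ : 0 < γ₂)
    (hθ₁ : 0 < θ₁) (hθ₂ : 0 < θ₂) (hh₁ : 0 < h₁) (hh₂ : 0 < h₂)
    (hθh₁ : 0 < θ₁ - h₁) (hθh₂ : 0 < θ₂ - h₂)
    (η₁ η₂ : ℝ → ℝ → ℝ)
    (hη₁ : ∀ x q, η₁ x q = (2 * q - 1) * (-x + θ₁ + (1 - 2 * q) * h₁))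
    (hη₂ : ∀ x q, η₂ x q = (2 * q - 1) * (-x + θ₂ + (1 - 2 * q) * h₂))
    (C : Set (ℝ × ℝ × ℝ × ℝ))
    (hC : C = {z : ℝ × ℝ × ℝ × ℝ |
      0 ≤ z.1 ∧ 0 ≤ z.2.1 ∧ (z.2.2.1 = 0 ∨ z.2.2.1 = 1) ∧ (z.2.2.2 = 0 ∨ z.2.2.2 = 1) ∧
      η₁ z.1 z.2.2.1 ≤ 0 ∧ η₂ z.2.1 z.2.2.2 ≤ 0})
    (F : (ℝ × ℝ × ℝ × ℝ) → (ℝ × ℝ × ℝ × ℝ))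
    (hF : ∀ z : ℝ × ℝ × ℝ × ℝ,
      F z = (k₁ * (1 - z.2.2.2) - γ₁ * z.1, k₂ * z.2.2.1 - γ₂ * z.2.1, 0, 0))
    (hc1 : 0 < k₁ / γ₁) (hc2 : k₁ / γ₁ < θ₁ - h₁) :
    ((k₁ / γ₁, 0, 0, 0) : ℝ × ℝ × ℝ × ℝ) ∈ C ∧
    F (k₁ / γ₁, 0, 0, 0) = 0 ∧
    ∀ z ∈ C, F z = 0 → z = ((k₁ / γ₁, 0, 0, 0) : ℝ × ℝ × ℝ × ℝ) :=
  case2_equilibrium_general k₁ k₂ γ₁ γ₂ θ₁ θ₂ h₁ h₂ hγ₁ hγ₂ hh₁ hh₂ hθh₁ hθh₂ η₁ η₂ hη₁ hη₂ C hC F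
    hF hc1 hc2
end

section
/- Case 5 — no isolated equilibrium (Proposition on equilibria, case 5): if θ₁ + h₁ < k₁/γ₁ and θ₂ + h₂ < k₂/γ₂, then there is no point z ∈ C with F(z) = 0. -/
/-!
At an equilibrium each gene sits at `x = k u / γ`, where `u ∈ {0, 1}` is its input
(`1 - q₂` for gene 1, `q₁` for gene 2). Since `θ - h > 0` and `θ + h < k / γ`, the hysteresis
constraint `η(x, q) ≤ 0` then forces the mode `q` to equal the input `u`. The loop of the two genes
contains exactly one repression, so `q₁ = 1 - q₂` and `q₂ = q₁` would make `q₁ = 1/2`.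
-/

section ThresholdSwitch

variable {k γ θ h x q u : ℝ}

lemma flow_constraint_off_iff :
    (2 * 0 - 1) * (-x + θ + (1 - 2 * 0) * h) ≤ 0 ↔ x ≤ θ + h := by
  constructor <;> intro _ <;> linarith

lemma flow_constraint_on_iff :
    (2 * 1 - 1) * (-x + θ + (1 - 2 * 1) * h) ≤ 0 ↔ θ - h ≤ x := by
  constructor <;> intro _ <;> linarith

lemma mode_eq_input_of_equilibrium (hγ : 0 < γ) (hθh : 0 < θ - h) (hc : θ + h < k / γ)
    (hq : q = 0 ∨ q = 1) (hu : u = 0 ∨ u = 1)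
    (hη : (2 * q - 1) * (-x + θ + (1 - 2 * q) * h) ≤ 0) (hx : k * u - γ * x = 0) : q = u := by
  have hx_eq : x = k * u / γ := by
    rw [eq_div_iff hγ.ne']
    linarith
  rcases hu with rfl | rfl <;> rcases hq with rfl | rfl
  · rfl
  · rw [flow_constraint_on_iff] at hη
    simp only [mul_zero, zero_div] at hx_eq
    linarith
  · rw [flow_constraint_off_iff] at hη
    rw [mul_one] at hx_eq
    linarith
  · rfl

end ThresholdSwitch

lemma one_sub_eq_zero_or_one {q : ℝ} (hq : q = 0 ∨ q = 1) : 1 - q = 0 ∨ 1 - q = 1 := by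
  rcases hq with rfl | rfl <;> norm_num

theorem case5_no_equilibrium_general
    (k₁ k₂ γ₁ γ₂ θ₁ θ₂ h₁ h₂ : ℝ)
    (hγ₁ : 0 < γ₁) (hγ₂ : 0 < γ₂)
    (hθh₁ : 0 < θ₁ - h₁) (hθh₂ : 0 < θ₂ - h₂)
    (η₁ η₂ : ℝ → ℝ → ℝ)
    (hη₁ : ∀ x q, η₁ x q = (2 * q - 1) * (-x + θ₁ + (1 - 2 * q) * h₁))
    (hη₂ : ∀ x q, η₂ x q = (2 * q - 1) * (-x + θ₂ + (1 - 2 * q) * h₂))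
    (C : Set (ℝ × ℝ × ℝ × ℝ))
    (hC : C = {z : ℝ × ℝ × ℝ × ℝ |
      0 ≤ z.1 ∧ 0 ≤ z.2.1 ∧ (z.2.2.1 = 0 ∨ z.2.2.1 = 1) ∧ (z.2.2.2 = 0 ∨ z.2.2.2 = 1) ∧
      η₁ z.1 z.2.2.1 ≤ 0 ∧ η₂ z.2.1 z.2.2.2 ≤ 0})
    (F : (ℝ × ℝ × ℝ × ℝ) → (ℝ × ℝ × ℝ × ℝ))
    (hF : ∀ z : ℝ × ℝ × ℝ × ℝ,
      F z = (k₁ * (1 - z.2.2.2) - γ₁ * z.1, k₂ * z.2.2.1 - γ₂ * z.2.1, 0, 0))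
    (hc1 : θ₁ + h₁ < k₁ / γ₁) (hc2 : θ₂ + h₂ < k₂ / γ₂) :
    ∀ z ∈ C, F z ≠ 0 := by
  rintro ⟨x₁, x₂, q₁, q₂⟩ hz hFz
  rw [hC] at hz
  obtain ⟨-, -, hq₁, hq₂, hη₁z, hη₂z⟩ := hz
  rw [hη₁] at hη₁z
  rw [hη₂] at hη₂z
  rw [hF, Prod.mk_eq_zero, Prod.mk_eq_zero] at hFz
  obtain ⟨hx₁, hx₂, -⟩ := hFz
  have hmode₁ : q₁ = 1 - q₂ :=
    mode_eq_input_of_equilibrium hγ₁ hθh₁ hc1 hq₁ (one_sub_eq_zero_or_one hq₂) hη₁z hx₁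
  have hmode₂ : q₂ = q₁ := mode_eq_input_of_equilibrium hγ₂ hθh₂ hc2 hq₂ hq₁ hη₂z hx₂
  rcases hq₁ with rfl | rfl <;> linarith

/-- Case 5 — no isolated equilibrium: if θ₁ + h₁ < k₁/γ₁ and θ₂ + h₂ < k₂/γ₂, then
there is no point z ∈ C with F z = 0. -/
theorem case5_no_equilibrium
    (k₁ k₂ γ₁ γ₂ θ₁ θ₂ h₁ h₂ : ℝ)
    (hk₁ : 0 < k₁) (hk₂ : 0 < k₂) (hγ₁ : 0 < γ₁) (hγ₂ : 0 < γ₂)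
    (hθ₁ : 0 < θ₁) (hθ₂ : 0 < θ₂) (hh₁ : 0 < h₁) (hh₂ : 0 < h₂)
    (hθh₁ : 0 < θ₁ - h₁) (hθh₂ : 0 < θ₂ - h₂)
    (η₁ η₂ : ℝ → ℝ → ℝ)
    (hη₁ : ∀ x q, η₁ x q = (2 * q - 1) * (-x + θ₁ + (1 - 2 * q) * h₁))
    (hη₂ : ∀ x q, η₂ x q = (2 * q - 1) * (-x + θ₂ + (1 - 2 * q) * h₂))
    (C : Set (ℝ × ℝ × ℝ × ℝ))
    (hC : C = {z : ℝ × ℝ × ℝ × ℝ |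
      0 ≤ z.1 ∧ 0 ≤ z.2.1 ∧ (z.2.2.1 = 0 ∨ z.2.2.1 = 1) ∧ (z.2.2.2 = 0 ∨ z.2.2.2 = 1) ∧
      η₁ z.1 z.2.2.1 ≤ 0 ∧ η₂ z.2.1 z.2.2.2 ≤ 0})
    (F : (ℝ × ℝ × ℝ × ℝ) → (ℝ × ℝ × ℝ × ℝ))
    (hF : ∀ z : ℝ × ℝ × ℝ × ℝ,
      F z = (k₁ * (1 - z.2.2.2) - γ₁ * z.1, k₂ * z.2.2.1 - γ₂ * z.2.1, 0, 0))
    (hc1 : θ₁ + h₁ < k₁ / γ₁) (hc2 : θ₂ + h₂ < k₂ / γ₂) :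
    ∀ z ∈ C, F z ≠ 0 :=
  case5_no_equilibrium_general k₁ k₂ γ₁ γ₂ θ₁ θ₂ h₁ h₂ hγ₁ hγ₂ hθh₁ hθh₂ η₁ η₂ hη₁ hη₂ C hC F hF hc1
    hc2
end

section
/- Forward invariance and convergence in the C₂ region (key step in the proof that z₁* is globally asymptotically stable, case 1): assume θ₁ + h₁ < k₁/γ₁ and 0 < k₂/γ₂ < θ₂ + h₂, and let K₂ = [θ₁−h₁, ∞) × [0, θ₂+h₂] ⊂ ℝ². For every x₀ ∈ K₂, the solution x(t) = (k₁/γ₁ + e^{−γ₁t}(x₀₁ − k₁/γ₁), k₂/γ₂ + e^{−γ₂t}(x₀₂ − k₂/γ₂)) of the flow with q = (1,0) satisfies x(t) ∈ K₂ for all t ≥ 0, and x(t) → (k₁/γ₁, k₂/γ₂) as t → ∞. -/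
/-! For `t ≥ 0` the factor `e^{-γt}` lies in `[0, 1]`, so each coordinate of the solution lies
on the segment between its initial value and its equilibrium value. Both endpoints lie in the
corresponding interval factor of `K₂`, which is convex; convergence is `e^{-γt} → 0`. -/

open Set Filter Topology Real

lemma exp_neg_mul_mem_Icc {γ t : ℝ} (hγ : 0 ≤ γ) (ht : 0 ≤ t) : exp (-γ * t) ∈ Icc 0 1 :=
  ⟨(exp_pos _).le, exp_le_one_iff.mpr (by nlinarith)⟩

lemma Convex.add_exp_neg_mul_smul_sub_mem {E : Type*} [AddCommGroup E] [Module ℝ E] {s : Set E}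
    (hs : Convex ℝ s) {e x₀ : E} (he : e ∈ s) (hx₀ : x₀ ∈ s) {γ t : ℝ} (hγ : 0 ≤ γ) (ht : 0 ≤ t) :
    e + exp (-γ * t) • (x₀ - e) ∈ s :=
  hs.add_smul_sub_mem he hx₀ (exp_neg_mul_mem_Icc hγ ht)

lemma tendsto_add_exp_neg_mul_smul_sub {E : Type*} [NormedAddCommGroup E] [NormedSpace ℝ E]
    (e x₀ : E) {γ : ℝ} (hγ : 0 < γ) :
    Tendsto (fun t => e + exp (-γ * t) • (x₀ - e)) atTop (𝓝 e) := by
  have hexp : Tendsto (fun t => exp (-γ * t)) atTop (𝓝 0) :=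
    tendsto_exp_atBot.comp (tendsto_id.const_mul_atTop_of_neg (neg_neg_of_pos hγ))
  simpa using tendsto_const_nhds.add (hexp.smul_const (x₀ - e))

theorem C2_region_invariant_and_convergent_general
    (k₁ k₂ γ₁ γ₂ θ₁ θ₂ h₁ h₂ : ℝ)
    (hγ₁ : 0 < γ₁) (hγ₂ : 0 < γ₂) (hh₁ : 0 < h₁)
    (hc1 : θ₁ + h₁ < k₁ / γ₁) (hc2 : 0 < k₂ / γ₂) (hc3 : k₂ / γ₂ < θ₂ + h₂)
    (x₀ : ℝ × ℝ) (hx₀ : x₀ ∈ Set.Ici (θ₁ - h₁) ×ˢ Set.Icc (0 : ℝ) (θ₂ + h₂))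
    (x : ℝ → ℝ × ℝ)
    (hx : ∀ t, x t = (k₁ / γ₁ + Real.exp (-γ₁ * t) * (x₀.1 - k₁ / γ₁),
                      k₂ / γ₂ + Real.exp (-γ₂ * t) * (x₀.2 - k₂ / γ₂))) :
    (∀ t, 0 ≤ t → x t ∈ Set.Ici (θ₁ - h₁) ×ˢ Set.Icc (0 : ℝ) (θ₂ + h₂)) ∧
    Filter.Tendsto x Filter.atTop (nhds ((k₁ / γ₁, k₂ / γ₂) : ℝ × ℝ)) := by
  have he₁ : k₁ / γ₁ ∈ Ici (θ₁ - h₁) := mem_Ici.mpr (by linarith)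
  have he₂ : k₂ / γ₂ ∈ Icc 0 (θ₂ + h₂) := ⟨hc2.le, hc3.le⟩
  refine ⟨fun t ht => ?_, ?_⟩
  · rw [hx t]
    exact ⟨(convex_Ici _).add_exp_neg_mul_smul_sub_mem he₁ hx₀.1 hγ₁.le ht,
      (convex_Icc _ _).add_exp_neg_mul_smul_sub_mem he₂ hx₀.2 hγ₂.le ht⟩
  · rw [show x = _ from funext hx]
    exact (tendsto_add_exp_neg_mul_smul_sub _ x₀.1 hγ₁).prodMk_nhds
      (tendsto_add_exp_neg_mul_smul_sub _ x₀.2 hγ₂)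

/-- Forward invariance of the `C₂` region `K₂ = [θ₁-h₁, ∞) × [0, θ₂+h₂]` and convergence
to the equilibrium `(k₁/γ₁, k₂/γ₂)` for the explicit solution of the flow with `q = (1,0)`,
under the case-1 parameter conditions. -/
theorem C2_region_invariant_and_convergent
    (k₁ k₂ γ₁ γ₂ θ₁ θ₂ h₁ h₂ : ℝ)
    (hk₁ : 0 < k₁) (hk₂ : 0 < k₂) (hγ₁ : 0 < γ₁) (hγ₂ : 0 < γ₂)
    (hθ₁ : 0 < θ₁) (hθ₂ : 0 < θ₂) (hh₁ : 0 < h₁) (hh₂ : 0 < h₂)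
    (hθh₁ : 0 < θ₁ - h₁) (hθh₂ : 0 < θ₂ - h₂)
    (hc1 : θ₁ + h₁ < k₁ / γ₁) (hc2 : 0 < k₂ / γ₂) (hc3 : k₂ / γ₂ < θ₂ + h₂)
    (x₀ : ℝ × ℝ) (hx₀ : x₀ ∈ Set.Ici (θ₁ - h₁) ×ˢ Set.Icc (0 : ℝ) (θ₂ + h₂))
    (x : ℝ → ℝ × ℝ)
    (hx : ∀ t, x t = (k₁ / γ₁ + Real.exp (-γ₁ * t) * (x₀.1 - k₁ / γ₁),
                      k₂ / γ₂ + Real.exp (-γ₂ * t) * (x₀.2 - k₂ / γ₂))) :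
    (∀ t, 0 ≤ t → x t ∈ Set.Ici (θ₁ - h₁) ×ˢ Set.Icc (0 : ℝ) (θ₂ + h₂)) ∧
    Filter.Tendsto x Filter.atTop (nhds ((k₁ / γ₁, k₂ / γ₂) : ℝ × ℝ)) :=
  C2_region_invariant_and_convergent_general k₁ k₂ γ₁ γ₂ θ₁ θ₂ h₁ h₂ hγ₁ hγ₂ hh₁ hc1 hc2 hc3 x₀ hx₀
    x hx
end

section
/- Finite-time exit from the C₁ region under case 1 parameters: assume θ₁ + h₁ < k₁/γ₁, and let x₀ ∈ [0, θ₁+h₁] × [0, θ₂+h₂]. Consider the solution x(t) = (k₁/γ₁ + e^{−γ₁t}(x₀₁ − k₁/γ₁), x₀₂·e^{−γ₂t}) of the flow with q = (0,0). Then there exists t* ≥ 0 such that x₁(t*) = θ₁ + h₁, while for all t ∈ [0, t*] one has x(t) ∈ [0, θ₁+h₁] × [0, θ₂+h₂]; i.e., every trajectory starting in the C₁ region reaches the switching boundary x₁ = θ₁ + h₁ in finite time without leaving the region. -/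
/-!
With `c = k₁/γ₁`, the first coordinate `c + e^{-γ₁t}(x₀₁ - c)` relaxes monotonically from `x₀₁`
towards `c > θ₁ + h₁`, so it crosses the level `θ₁ + h₁` at the explicit time
`t* = log ((c - x₀₁) / (c - (θ₁ + h₁))) / γ₁` and stays in `[x₀₁, θ₁ + h₁]` before that. The second
coordinate only decays, so it never leaves `[0, x₀₂]`.
-/

open Real Set

theorem monotone_relaxation {γ a c : ℝ} (hγ : 0 ≤ γ) (hac : a ≤ c) :
    Monotone fun t => c + exp (-γ * t) * (a - c) := by
  have hdecay : Antitone fun t : ℝ => exp (-γ * t) := fun s t hst =>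
    exp_le_exp.mpr (by nlinarith)
  exact (hdecay.mul_const_of_nonpos (sub_nonpos.mpr hac)).const_add c

theorem exists_relaxation_eq {γ a b c : ℝ} (hγ : 0 < γ) (hab : a ≤ b) (hbc : b < c) :
    ∃ t, 0 ≤ t ∧ c + exp (-γ * t) * (a - c) = b := by
  have hcb : 0 < c - b := sub_pos.mpr hbc
  have hca : 0 < c - a := by linarith
  refine ⟨log ((c - a) / (c - b)) / γ, ?_, ?_⟩
  · exact div_nonneg (log_nonneg ((one_le_div hcb).mpr (by linarith))) hγ.le
  · have hexp : exp (-γ * (log ((c - a) / (c - b)) / γ)) = (c - b) / (c - a) := by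
      rw [show -γ * (log ((c - a) / (c - b)) / γ) = log ((c - b) / (c - a)) by
        rw [← inv_div (c - a), log_inv]; field_simp, exp_log (div_pos hcb hca)]
    rw [hexp]
    field_simp
    ring

theorem mul_exp_neg_mem_Icc {y M γ t : ℝ} (hy : y ∈ Icc 0 M) (hγ : 0 ≤ γ) (ht : 0 ≤ t) :
    y * exp (-γ * t) ∈ Icc 0 M := by
  have hexp : exp (-γ * t) ≤ 1 := exp_le_one_iff.mpr (by nlinarith)
  exact ⟨by positivity [hy.1], (mul_le_of_le_one_right hy.1 hexp).trans hy.2⟩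

theorem finite_time_exit_from_C1_general
    (k₁ γ₁ γ₂ θ₁ θ₂ h₁ h₂ : ℝ)
    (hγ₁ : 0 < γ₁) (hγ₂ : 0 < γ₂)
    (hc1 : θ₁ + h₁ < k₁ / γ₁)
    (x₀ : ℝ × ℝ) (hx₀ : x₀ ∈ Set.Icc (0 : ℝ) (θ₁ + h₁) ×ˢ Set.Icc (0 : ℝ) (θ₂ + h₂))
    (x : ℝ → ℝ × ℝ)
    (hx : ∀ t, x t = (k₁ / γ₁ + Real.exp (-γ₁ * t) * (x₀.1 - k₁ / γ₁),
                      x₀.2 * Real.exp (-γ₂ * t))) :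
    ∃ tstar, 0 ≤ tstar ∧ (x tstar).1 = θ₁ + h₁ ∧
      ∀ t, 0 ≤ t → t ≤ tstar →
        x t ∈ Set.Icc (0 : ℝ) (θ₁ + h₁) ×ˢ Set.Icc (0 : ℝ) (θ₂ + h₂) := by
  obtain ⟨⟨hx₀₁_nonneg, hx₀₁_le⟩, hx₀₂⟩ := hx₀
  obtain ⟨tstar, htstar, hexit⟩ := exists_relaxation_eq hγ₁ hx₀₁_le hc1
  refine ⟨tstar, htstar, by rw [hx]; exact hexit, fun t ht htt => ?_⟩
  have hmono := monotone_relaxation hγ₁.le (hx₀₁_le.trans hc1.le)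
  rw [hx]
  refine ⟨⟨?_, hexit ▸ hmono htt⟩, mul_exp_neg_mem_Icc hx₀₂ hγ₂.le ht⟩
  calc (0 : ℝ) ≤ x₀.1 := hx₀₁_nonneg
    _ = k₁ / γ₁ + exp (-γ₁ * 0) * (x₀.1 - k₁ / γ₁) := by simp
    _ ≤ _ := hmono ht

/-- Finite-time exit from the `C₁` region under case-1 parameters: if `θ₁ + h₁ < k₁/γ₁`,
then the flow with `q = (0,0)` started in `[0, θ₁+h₁] × [0, θ₂+h₂]` reaches the switching
boundary `x₁ = θ₁ + h₁` in finite time without leaving the region. -/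
theorem finite_time_exit_from_C1
    (k₁ k₂ γ₁ γ₂ θ₁ θ₂ h₁ h₂ : ℝ)
    (hk₁ : 0 < k₁) (hk₂ : 0 < k₂) (hγ₁ : 0 < γ₁) (hγ₂ : 0 < γ₂)
    (hθ₁ : 0 < θ₁) (hθ₂ : 0 < θ₂) (hh₁ : 0 < h₁) (hh₂ : 0 < h₂)
    (hθh₁ : 0 < θ₁ - h₁) (hθh₂ : 0 < θ₂ - h₂)
    (hc1 : θ₁ + h₁ < k₁ / γ₁)
    (x₀ : ℝ × ℝ) (hx₀ : x₀ ∈ Set.Icc (0 : ℝ) (θ₁ + h₁) ×ˢ Set.Icc (0 : ℝ) (θ₂ + h₂))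
    (x : ℝ → ℝ × ℝ)
    (hx : ∀ t, x t = (k₁ / γ₁ + Real.exp (-γ₁ * t) * (x₀.1 - k₁ / γ₁),
                      x₀.2 * Real.exp (-γ₂ * t))) :
    ∃ tstar, 0 ≤ tstar ∧ (x tstar).1 = θ₁ + h₁ ∧
      ∀ t, 0 ≤ t → t ≤ tstar →
        x t ∈ Set.Icc (0 : ℝ) (θ₁ + h₁) ×ˢ Set.Icc (0 : ℝ) (θ₂ + h₂) :=
  finite_time_exit_from_C1_general k₁ γ₁ γ₂ θ₁ θ₂ h₁ h₂ hγ₁ hγ₂ hc1 x₀ hx₀ x hx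
end
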